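/- arXiv:1210.1299 — 6 statements merged into one kernel-verified Lean document; each statement's English description precedes it below -/
import Mathlib

section
/- For n, m ≥ 2, the directed cycle C_m is φ_n-injective if and only if m divides n. -/
/-- A quiver: vertex set, edge set, source and target maps. -/
structure Quiv where
  V : Type
  E : Type
  s : E → V
  t : E → V

/-- A quiver homomorphism. -/
@[ext]
structure QuivHom (G H : Quiv) where
  onV : G.V → H.V
  onE : G.E → H.E
  comm_s : ∀ e, H.s (onE e) = onV (G.s e)
  comm_t : ∀ e, H.t (onE e) = onV (G.t e)

/-- Identity quiver homomorphism. -/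
def QuivHom.id (G : Quiv) : QuivHom G G :=
  ⟨_root_.id, _root_.id, fun _ => rfl, fun _ => rfl⟩

/-- Composition of quiver homomorphisms. -/
def QuivHom.comp {G H K : Quiv} (g : QuivHom H K) (f : QuivHom G H) : QuivHom G K :=
  ⟨g.onV ∘ f.onV, g.onE ∘ f.onE,
    fun e => by simp [Function.comp, g.comm_s, f.comm_s],
    fun e => by simp [Function.comp, g.comm_t, f.comm_t]⟩

/-- The directed path `P_n` with vertices `a_0, …, a_{n-1}` and edges `a_i → a_{i+1}`. -/
def Quiv.path (n : ℕ) : Quiv :=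
  ⟨Fin n, Fin (n - 1), fun i => ⟨i.val, by have := i.isLt; omega⟩,
    fun i => ⟨i.val + 1, by have := i.isLt; omega⟩⟩

/-- The directed cycle `C_n`. -/
def Quiv.cyc (n : ℕ) : Quiv :=
  ⟨Fin n, Fin n, _root_.id, fun i => ⟨(i.val + 1) % n, Nat.mod_lt _ i.pos⟩⟩

/-- The natural embedding `φ_n : P_n → C_n`. -/
def pathEmb (n : ℕ) : QuivHom (Quiv.path n) (Quiv.cyc n) where
  onV := _root_.id
  onE := fun i => ⟨i.val, by have := i.isLt; omega⟩
  comm_s := fun e => rfl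
  comm_t := fun e => by
    have he := e.isLt
    apply Fin.ext
    show (e.val + 1) % n = e.val + 1
    exact Nat.mod_eq_of_lt (by omega)

/-- `J` is `φ_n`-injective: every quiver map `P_n → J` factors through `φ_n`. -/
def PhiInj (n : ℕ) (J : Quiv) : Prop :=
  ∀ ψ : QuivHom (Quiv.path n) J, ∃ ψ' : QuivHom (Quiv.cyc n) J,
    ψ'.comp (pathEmb n) = ψ

/-- `v, e` form a walk of length `k` in `J` (only indices `< k` matter). -/
def HasWalk (J : Quiv) (k : ℕ) (v : ℕ → J.V) (e : ℕ → J.E) : Prop :=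
  ∀ i < k, J.s (e i) = v i ∧ J.t (e i) = v (i + 1)

/-- There is an edge from `a` to `b` in `J`. -/
def Quiv.Edge (J : Quiv) (a b : J.V) : Prop := ∃ f, J.s f = a ∧ J.t f = b

/-- A loaded quiver: an edge between every (ordered) pair of vertices. -/
def Quiv.Loaded (J : Quiv) : Prop := ∀ a b, J.Edge a b

/-- `H`, with partitions `A` of its vertices and `B` of its edges indexed by the
vertices and edges of `G`, is a blow-up of `G`. -/
def IsBlowup (G H : Quiv) (A : G.V → Set H.V) (B : G.E → Set H.E) : Prop :=
  (∀ w, ∃! v, w ∈ A v) ∧ (∀ f, ∃! e, f ∈ B e) ∧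
  (∀ e f, f ∈ B e → H.s f ∈ A (G.s e) ∧ H.t f ∈ A (G.t e)) ∧
  (∀ e x y, x ∈ A (G.s e) → y ∈ A (G.t e) → ∃ f ∈ B e, H.s f = x ∧ H.t f = y)

/-- Monomorphisms of quivers: injective vertex and edge maps. -/
def QuivHom.Mono {G H : Quiv} (f : QuivHom G H) : Prop :=
  Function.Injective f.onV ∧ Function.Injective f.onE

/-- A class of quiver morphisms. -/
def MorClass := ∀ D C : Quiv, Set (QuivHom D C)

/-- `J` is injective with respect to a class of morphisms `Φ`. -/
def ClassInjective (Φ : MorClass) (J : Quiv) : Prop :=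
  ∀ D C (φ : QuivHom D C), φ ∈ Φ D C → ∀ ψ : QuivHom D J,
    ∃ ψ' : QuivHom C J, ψ'.comp φ = ψ

/-- Undirected adjacency. -/
def Quiv.Adj (J : Quiv) (a b : J.V) : Prop := J.Edge a b ∨ J.Edge b a

/-- Weak connectivity. -/
def Quiv.WeaklyConnected (J : Quiv) : Prop :=
  ∀ a b : J.V, Relation.ReflTransGen J.Adj a b

/-- `J` has a closed walk of length `m`. -/
def ClosedWalk (J : Quiv) (m : ℕ) : Prop :=
  ∃ v e, HasWalk J m v e ∧ v m = v 0

/-- Cyclic successor on `Fin ℓ`. -/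
def finNext {ℓ : ℕ} (i : Fin ℓ) : Fin ℓ := ⟨(i.val + 1) % ℓ, Nat.mod_lt _ i.pos⟩

/-- Disjoint union (coproduct) of a family of quivers. -/
def Quiv.sigma {Λ : Type} (Jf : Λ → Quiv) : Quiv :=
  ⟨Σ l, (Jf l).V, Σ l, (Jf l).E,
    fun f => ⟨f.1, (Jf f.1).s f.2⟩, fun f => ⟨f.1, (Jf f.1).t f.2⟩⟩

/-! A map `P_n → J` extends along `φ_n` exactly when there is an edge from the image of the last
vertex back to the image of the first. Into `C_m`, every such map winds around the cycle from the
image `a` of the first vertex and sends the last one to `a + n - 1 mod m`, so the closing edge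
exists iff `a + n ≡ a mod m`, i.e. iff `m ∣ n`. -/

theorem QuivHom.edge_of_path {J : Quiv} {n : ℕ} (ψ : QuivHom (Quiv.path n) J) (i : ℕ)
    (hi : i + 1 < n) : J.Edge (ψ.onV ⟨i, by omega⟩) (ψ.onV ⟨i + 1, hi⟩) :=
  ⟨ψ.onE ⟨i, by omega⟩, ψ.comm_s _, ψ.comm_t _⟩

theorem phiInj_iff_forall_edge {n : ℕ} (hn : 0 < n) (J : Quiv) :
    PhiInj n J ↔ ∀ ψ : QuivHom (Quiv.path n) J,
      J.Edge (ψ.onV ⟨n - 1, by omega⟩) (ψ.onV ⟨0, hn⟩) := by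
  constructor
  · intro h ψ
    obtain ⟨ψ', hψ'⟩ := h ψ
    have hV : ψ'.onV = ψ.onV := congrArg QuivHom.onV hψ'
    let closing : (Quiv.cyc n).E := ⟨n - 1, by omega⟩
    have hlast : (Quiv.cyc n).t closing = ⟨0, hn⟩ :=
      Fin.ext (by simp [closing, Quiv.cyc, Nat.sub_add_cancel hn])
    refine ⟨ψ'.onE closing, ?_, ?_⟩
    · rw [ψ'.comm_s, hV]; rfl
    · rw [ψ'.comm_t, hlast, hV]
  · rintro h ψ
    obtain ⟨f, hfs, hft⟩ := h ψ
    refine ⟨⟨ψ.onV, fun e => if he : e.val < n - 1 then ψ.onE ⟨e.val, he⟩ else f, ?_, ?_⟩, ?_⟩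
    · intro (e : Fin n)
      split_ifs with he
      · exact ψ.comm_s _
      · exact hfs.trans (congrArg ψ.onV (Fin.ext (by show n - 1 = e.val; omega)))
    · intro (e : Fin n)
      split_ifs with he
      · refine (ψ.comm_t _).trans (congrArg ψ.onV (Fin.ext ?_))
        exact (Nat.mod_eq_of_lt (by omega)).symm
      · refine hft.trans (congrArg ψ.onV (Fin.ext ?_))
        show 0 = (e.val + 1) % n
        rw [show e.val + 1 = n by omega, Nat.mod_self]
    · exact QuivHom.ext rfl (funext fun i => dif_pos i.isLt)

theorem cyc_edge_iff {m : ℕ} (a b : Fin m) :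
    (Quiv.cyc m).Edge a b ↔ b.val = (a.val + 1) % m := by
  constructor
  · rintro ⟨f, rfl, rfl⟩
    rfl
  · intro h
    exact ⟨a, rfl, Fin.ext h.symm⟩

theorem val_onV_path_to_cyc {n m : ℕ} (ψ : QuivHom (Quiv.path n) (Quiv.cyc m)) (i : ℕ)
    (hi : i < n) : (ψ.onV ⟨i, hi⟩).val = ((ψ.onV ⟨0, by omega⟩).val + i) % m := by
  induction i with
  | zero => exact (Nat.mod_eq_of_lt (ψ.onV _).isLt).symm
  | succ i ih =>
    rw [(cyc_edge_iff _ _).1 (ψ.edge_of_path i hi), ih, Nat.mod_add_mod, Nat.add_assoc]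

theorem cyc_edge_last_first_iff {n m : ℕ} (hn : 0 < n)
    (ψ : QuivHom (Quiv.path n) (Quiv.cyc m)) :
    (Quiv.cyc m).Edge (ψ.onV ⟨n - 1, by omega⟩) (ψ.onV ⟨0, hn⟩) ↔ m ∣ n := by
  refine (cyc_edge_iff _ _).trans ?_
  rw [val_onV_path_to_cyc ψ (n - 1), Nat.mod_add_mod, Nat.add_assoc, Nat.sub_add_cancel hn,
    ← Nat.add_modEq_left_iff, Nat.ModEq, Nat.mod_eq_of_lt (ψ.onV ⟨0, hn⟩).isLt, eq_comm]

def pathToCyc (n : ℕ) {m : ℕ} (hm : 0 < m) : QuivHom (Quiv.path n) (Quiv.cyc m) where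
  onV i := ⟨i.val % m, Nat.mod_lt _ hm⟩
  onE i := ⟨i.val % m, Nat.mod_lt _ hm⟩
  comm_s _ := rfl
  comm_t i := Fin.ext (Nat.mod_add_mod i.val m 1)

/-- for `n, m ≥ 2`, the cycle `C_m` is `φ_n`-injective iff `m ∣ n`. -/
theorem cyc_phiInj_iff (n m : ℕ) (hn : 2 ≤ n) (hm : 2 ≤ m) :
    PhiInj n (Quiv.cyc m) ↔ m ∣ n := by
  have hn0 : 0 < n := by omega
  rw [phiInj_iff_forall_edge hn0]
  exact ⟨fun h => (cyc_edge_last_first_iff hn0 _).1 (h (pathToCyc n (by omega))),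
    fun hdvd ψ => (cyc_edge_last_first_iff hn0 ψ).2 hdvd⟩
end

section
/- For n ≥ 3, let J be a φ_n-injective quiver. If J contains distinct vertices u ≠ w, an edge g from u to w, and a loop f at w, then J contains an edge from w to u and a loop at u. -/
/-! The walk `u → w → w → ⋯ → w` of length `n - 1`, following the loop at `w`, is closed up by
an edge `w → u`. Replacing its last step by that edge gives a walk `u → w → ⋯ → w → u`, still of
length `n - 1` since `n ≥ 3`, and its closing edge is a loop at `u`. -/

theorem PhiInj.edge_of_hasWalk {n : ℕ} {J : Quiv} (hJ : PhiInj n J) (hn : 0 < n)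
    {v : ℕ → J.V} {e : ℕ → J.E} (hw : HasWalk J (n - 1) v e) :
    J.Edge (v (n - 1)) (v 0) := by
  let ψ : QuivHom (Quiv.path n) J :=
    ⟨fun i : Fin n => v i, fun i : Fin (n - 1) => e i,
      fun i : Fin (n - 1) => (hw i i.isLt).1, fun i : Fin (n - 1) => (hw i i.isLt).2⟩
  obtain ⟨ψ', hψ'⟩ := hJ ψ
  have hV : ∀ i : Fin n, ψ'.onV i = v i := fun i => congrFun (congrArg QuivHom.onV hψ') i
  refine ⟨ψ'.onE ⟨n - 1, by omega⟩, (ψ'.comm_s _).trans (hV _), ?_⟩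
  -- the closing edge of `C_n` ends at `(n - 1 + 1) % n = 0`
  refine (ψ'.comm_t _).trans ((hV _).trans ?_)
  show v ((n - 1 + 1) % n) = v 0
  rw [Nat.sub_add_cancel hn, Nat.mod_self]

theorem Quiv.exists_hasWalk_of_loop {J : Quiv} {a b c : J.V} {k : ℕ} (hk : 2 ≤ k)
    (hab : J.Edge a b) (hb : J.Edge b b) (hbc : J.Edge b c) :
    ∃ v e, HasWalk J k v e ∧ v 0 = a ∧ v k = c := by
  obtain ⟨g, hgs, hgt⟩ := hab
  obtain ⟨f, hfs, hft⟩ := hb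
  obtain ⟨h, hhs, hht⟩ := hbc
  refine ⟨fun i => if i = 0 then a else if i = k then c else b,
    fun i => if i = 0 then g else if i = k - 1 then h else f, fun i hi => ?_, rfl,
    by simp; omega⟩
  rcases Nat.eq_zero_or_pos i with rfl | hi0
  · simp [hgs, hgt, show 1 ≠ k by omega]
  · by_cases hlast : i = k - 1
    · simp [hlast, hhs, hht, show k ≠ 0 by omega, show k - 1 ≠ 0 by omega,
        show k - 1 ≠ k by omega, Nat.sub_add_cancel (show 1 ≤ k by omega)]
    · simp [hlast, hfs, hft, hi0.ne', show i ≠ k by omega, show i + 1 ≠ k by omega]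

theorem propagating_loops_general (n : ℕ) (hn : 3 ≤ n) (J : Quiv) (hJ : PhiInj n J)
    (u w : J.V) (hg : J.Edge u w) (hf : J.Edge w w) :
    J.Edge w u ∧ J.Edge u u := by
  have hwu : J.Edge w u := by
    obtain ⟨v, e, hw, hv0, hvk⟩ := Quiv.exists_hasWalk_of_loop (k := n - 1) (by omega) hg hf hf
    simpa [hv0, hvk] using hJ.edge_of_hasWalk (by omega) hw
  obtain ⟨v, e, hw, hv0, hvk⟩ := Quiv.exists_hasWalk_of_loop (k := n - 1) (by omega) hg hf hwu
  exact ⟨hwu, by simpa [hv0, hvk] using hJ.edge_of_hasWalk (by omega) hw⟩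

/-- propagating loops. -/
theorem propagating_loops (n : ℕ) (hn : 3 ≤ n) (J : Quiv) (hJ : PhiInj n J)
    (u w : J.V) (huw : u ≠ w) (hg : J.Edge u w) (hf : J.Edge w w) :
    J.Edge w u ∧ J.Edge u u :=
  propagating_loops_general n hn J hJ u w hg hf
end

section
/- For n ≥ 3, let J be a φ_n-injective quiver. If J contains distinct vertices w, x, y with an edge between w and x (in either direction), an edge between x and y (in either direction), and a loop at y, then J contains edges in both directions between every pair among {w, x, y}, and loops at all three vertices. -/
/-- Core lemma: from edges `a → m`, a loop at `m`, and `m → b`, `φ_n`-injectivity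
yields an edge `b → a`. -/
theorem tri_aux (n : ℕ) (hn : 3 ≤ n) (J : Quiv) (hJ : PhiInj n J)
    (a m b : J.V) (h1 : J.Edge a m) (h2 : J.Edge m m) (h3 : J.Edge m b) :
    J.Edge b a := by
  obtain ⟨f, hf1, hf2⟩ := h1
  obtain ⟨g, hg1, hg2⟩ := h2
  obtain ⟨h, hh1, hh2⟩ := h3
  -- vertex map
  set vmap : Fin n → J.V := fun i => if i.val = 0 then a else if i.val = n - 1 then b else m
    with hvmap
  set emap : Fin (n-1) → J.E := fun i => if i.val = 0 then f else if i.val = n - 2 then h else g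
    with hemap
  have hcs : ∀ e : Fin (n-1), J.s (emap e) = vmap ⟨e.val, by have := e.isLt; omega⟩ := by
    intro e
    have he := e.isLt
    by_cases h0 : e.val = 0
    · simp [hemap, hvmap, h0, hf1]
    · by_cases h2' : e.val = n - 2
      · have A : ¬ (n - 2 = 0) := by omega
        have B : ¬ (n - 2 = n - 1) := by omega
        simp [hemap, hvmap, h0, h2', A, B, hh1]
      · have C : ¬ (e.val = n - 1) := by omega
        simp [hemap, hvmap, h0, h2', C, hg1]
  have hct : ∀ e : Fin (n-1), J.t (emap e) = vmap ⟨e.val + 1, by have := e.isLt; omega⟩ := by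
    intro e
    have he := e.isLt
    by_cases h0 : e.val = 0
    · have D : ¬ ((1:ℕ) = n - 1) := by omega
      simp [hemap, hvmap, h0, hf2, D]
    · by_cases h2' : e.val = n - 2
      · have A : ¬ (n - 2 = 0) := by omega
        have E : n - 2 + 1 = n - 1 := by omega
        have F : ¬ (n - 1 = 0) := by omega
        simp [hemap, hvmap, h0, h2', hh2, A, E, F]
      · have h1' : ¬ (e.val + 1 = 0) := by omega
        have h2'' : ¬ (e.val + 1 = n - 1) := by omega
        simp [hemap, hvmap, h0, h2', hg2, h1', h2'']
  obtain ⟨psi', hpsi'⟩ := hJ ⟨vmap, emap, hcs, hct⟩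
  have honV : psi'.onV = vmap := congrArg QuivHom.onV hpsi'
  have hlt : n - 1 < n := by omega
  refine ⟨psi'.onE ⟨n - 1, hlt⟩, ?_, ?_⟩
  · have := psi'.comm_s ⟨n - 1, hlt⟩
    rw [this]
    show psi'.onV ⟨n-1, hlt⟩ = b
    rw [honV]
    simp [hvmap]
    omega
  · have := psi'.comm_t ⟨n - 1, hlt⟩
    rw [this]
    have : (Quiv.cyc n).t ⟨n-1, hlt⟩ = ⟨0, by omega⟩ := by
      apply Fin.ext
      show (n - 1 + 1) % n = 0
      have : n - 1 + 1 = n := by omega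
      rw [this, Nat.mod_self]
    rw [this, honV]
    simp [hvmap]

/-- triangulation. -/
theorem triangulation (n : ℕ) (hn : 3 ≤ n) (J : Quiv) (hJ : PhiInj n J)
    (w x y : J.V) (hwx : w ≠ x) (hxy : x ≠ y) (hwy : w ≠ y)
    (h1 : J.Adj w x) (h2 : J.Adj x y) (hloop : J.Edge y y) :
    J.Edge w x ∧ J.Edge x w ∧ J.Edge x y ∧ J.Edge y x ∧
    J.Edge w y ∧ J.Edge y w ∧ J.Edge w w ∧ J.Edge x x ∧ J.Edge y y := by
  have eyy : J.Edge y y := hloop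
  have hxy2 : J.Edge x y ∧ J.Edge y x := by
    rcases h2 with h | h
    · exact ⟨h, tri_aux n hn J hJ x y y h eyy eyy⟩
    · exact ⟨tri_aux n hn J hJ y y x eyy eyy h, h⟩
  obtain ⟨exy, eyx⟩ := hxy2
  have exx : J.Edge x x := tri_aux n hn J hJ x y x exy eyy eyx
  have hwx2 : J.Edge w x ∧ J.Edge x w := by
    rcases h1 with h | h
    · exact ⟨h, tri_aux n hn J hJ w x x h exx exx⟩
    · exact ⟨tri_aux n hn J hJ x x w exx exx h, h⟩
  obtain ⟨ewx, exw⟩ := hwx2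
  have eww : J.Edge w w := tri_aux n hn J hJ w x w ewx exx exw
  have ewy : J.Edge w y := tri_aux n hn J hJ y x w eyx exx exw
  have eyw : J.Edge y w := tri_aux n hn J hJ w x y ewx exx exy
  exact ⟨ewx, exw, exy, eyx, ewy, eyw, eww, exx, eyy⟩
end

section
/- For n ≥ 3, let J be a φ_n-injective quiver with nonempty vertex set. Then J is loaded (for every pair of vertices v, w there is an edge from v to w) if and only if J is weakly connected and has at least one vertex with a loop. -/
/-!
A walk of length `k < n` that passes through a vertex with a loop can be padded with copies of
that loop to a walk of length `n - 1`, so `φ_n`-injectivity closes it up with an edge back to its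
start. Applied to walks of length one and two, this makes loops spread along edges in either
direction (here `n ≥ 3` is needed), and once every vertex has a loop it makes the edge relation
symmetric and transitive, hence an equivalence relation containing the weak adjacency.
-/

namespace PhiInj

variable {n : ℕ} {J : Quiv}

theorem edge_of_walk (hJ : PhiInj n J) (hn : 0 < n) (v : ℕ → J.V)
    (hv : ∀ i < n - 1, J.Edge (v i) (v (i + 1))) : J.Edge (v (n - 1)) (v 0) := by
  let ψ : QuivHom (Quiv.path n) J :=
    { onV := fun i : Fin n => v i
      onE := fun i : Fin (n - 1) => (hv i i.isLt).choose
      comm_s := fun i : Fin (n - 1) => (hv i i.isLt).choose_spec.1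
      comm_t := fun i : Fin (n - 1) => (hv i i.isLt).choose_spec.2 }
  obtain ⟨ψ', hψ'⟩ := hJ ψ
  have hV : ∀ i : Fin n, ψ'.onV i = v i := fun i =>
    congrArg (fun g : QuivHom (Quiv.path n) J => g.onV i) hψ'
  let last : (Quiv.cyc n).E := (⟨n - 1, by omega⟩ : Fin n)
  have hwrap : (Quiv.cyc n).t last = (⟨0, hn⟩ : Fin n) := Fin.ext (by
    show (n - 1 + 1) % n = 0
    rw [Nat.sub_add_cancel hn, Nat.mod_self])
  refine ⟨ψ'.onE last, ?_, ?_⟩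
  · rw [ψ'.comm_s]; exact hV ⟨n - 1, by omega⟩
  · rw [ψ'.comm_t, hwrap]; exact hV ⟨0, hn⟩

/-- The walk `v 0 → ⋯ → v k` is padded by `n - 1 - k` copies of the loop at `v j`. -/
theorem edge_of_walk_of_loop (hJ : PhiInj n J) {k j : ℕ} (hkn : k < n) (hjk : j ≤ k)
    (v : ℕ → J.V) (hv : ∀ i < k, J.Edge (v i) (v (i + 1))) (hloop : J.Edge (v j) (v j)) :
    J.Edge (v k) (v 0) := by
  let r : ℕ → ℕ := fun i => min i j + (i - (j + (n - 1 - k)))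
  have hstep : ∀ i < n - 1, (r i < k ∧ r (i + 1) = r i + 1) ∨ (r i = j ∧ r (i + 1) = j) := by
    intro i hi; simp only [r]; omega
  have hpadded := hJ.edge_of_walk (by omega) (v ∘ r) fun i hi => by
    rcases hstep i hi with ⟨hlt, hsucc⟩ | ⟨hi, hsucc⟩
    · simpa only [Function.comp, hsucc] using hv _ hlt
    · simpa only [Function.comp, hi, hsucc] using hloop
  have h0 : r 0 = 0 := by simp only [r]; omega
  have hlast : r (n - 1) = k := by simp only [r]; omega
  simpa only [Function.comp, h0, hlast] using hpadded

theorem edge_symm_of_loop (hJ : PhiInj n J) (hn : 2 ≤ n) {x y : J.V} (hxy : J.Edge x y)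
    (hloop : J.Edge x x ∨ J.Edge y y) : J.Edge y x := by
  let v : ℕ → J.V := fun i => if i = 0 then x else y
  have hv : ∀ i < 1, J.Edge (v i) (v (i + 1)) := by
    intro i hi; obtain rfl : i = 0 := by omega
    simpa [v] using hxy
  rcases hloop with hx | hy
  · exact hJ.edge_of_walk_of_loop (j := 0) (by omega) (by omega) v hv hx
  · exact hJ.edge_of_walk_of_loop (j := 1) (by omega) le_rfl v hv hy

theorem loop_of_edge_of_edge (hJ : PhiInj n J) (hn : 3 ≤ n) {x y : J.V} (hxy : J.Edge x y)
    (hyx : J.Edge y x) (hy : J.Edge y y) : J.Edge x x := by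
  let v : ℕ → J.V := fun i => if i = 1 then y else x
  have hv : ∀ i < 2, J.Edge (v i) (v (i + 1)) := by
    intro i hi; interval_cases i <;> simpa [v]
  exact hJ.edge_of_walk_of_loop (j := 1) (by omega) (by omega) v hv hy

theorem loop_of_adj (hJ : PhiInj n J) (hn : 3 ≤ n) {x y : J.V} (hxy : J.Adj x y)
    (hx : J.Edge x x) : J.Edge y y := by
  have hboth : J.Edge x y ∧ J.Edge y x := by
    rcases hxy with hxy | hyx
    · exact ⟨hxy, hJ.edge_symm_of_loop (by omega) hxy (.inl hx)⟩
    · exact ⟨hJ.edge_symm_of_loop (by omega) hyx (.inr hx), hyx⟩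
  exact hJ.loop_of_edge_of_edge hn hboth.2 hboth.1 hx

theorem edge_equivalence (hJ : PhiInj n J) (hn : 3 ≤ n) (hloops : ∀ x, J.Edge x x) :
    Equivalence J.Edge := by
  have hsymm : ∀ {x y}, J.Edge x y → J.Edge y x := fun hxy =>
    hJ.edge_symm_of_loop (by omega) hxy (.inl (hloops _))
  refine ⟨hloops, hsymm, fun {x y z} hxy hyz => hsymm ?_⟩
  let v : ℕ → J.V := fun i => if i = 0 then x else if i = 1 then y else z
  have hv : ∀ i < 2, J.Edge (v i) (v (i + 1)) := by
    intro i hi; interval_cases i <;> simpa [v]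
  exact hJ.edge_of_walk_of_loop (j := 0) (by omega) (by omega) v hv (hloops x)

end PhiInj

/-- a nonempty `φ_n`-injective quiver (`n ≥ 3`) is loaded iff it
is weakly connected and has a loop. -/
theorem loaded_iff_connected_with_loop (n : ℕ) (hn : 3 ≤ n) (J : Quiv)
    (hJ : PhiInj n J) (hne : Nonempty J.V) :
    J.Loaded ↔ (J.WeaklyConnected ∧ ∃ f, J.s f = J.t f) := by
  constructor
  · intro hL
    obtain ⟨f, hs, ht⟩ := hL hne.some hne.some
    exact ⟨fun a b => .single (.inl (hL a b)), f, hs.trans ht.symm⟩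
  · rintro ⟨hc, f, hf⟩
    have hloops : ∀ x, J.Edge x x := fun x => by
      induction hc (J.s f) x with
      | refl => exact ⟨f, rfl, hf.symm⟩
      | tail _ hadj ih => exact hJ.loop_of_adj hn hadj ih
    have hequiv := hJ.edge_equivalence hn hloops
    intro a b
    induction hc a b with
    | refl => exact hloops a
    | tail _ hadj ih => exact hequiv.trans ih (hadj.elim id hequiv.symm)
end

section
/- For n ≥ 3, let J be a φ_n-injective, weakly connected quiver with a walk of length n−1. Then J is a blow-up of the directed cycle C_ℓ for some divisor ℓ of n: there is a partition of V(J) into nonempty sets B_0,…,B_{ℓ−1} such that every edge of J goes from some B_j to B_{j+1 mod ℓ}, and for every j and every x ∈ B_j, y ∈ B_{j+1 mod ℓ}, there is an edge from x to y. -/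
/-! φ_n-injectivity says that every walk of length `n - 1` is closed up by an edge back. Hence a
walk of length `k * (n - 1)` from `a` to `b` yields one of length `k` from `b` to `a`, and so a
walk of length `k * (n - 1) ^ 2` yields one of length `k` in the same direction. Closed walks of
length `n` spread along edges in both directions, so in a weakly connected `J` every vertex lies
on one and `J` is strongly connected. Let `ℓ` be the gcd of the lengths of closed walks at a base
vertex; then `ℓ ∣ n`, and the classes are the residues mod `ℓ` of lengths of walks from the base
vertex. For `x` in one class and `y` in the next, Schur's theorem on numerical semigroups provides
walks from `x` to `y` of every large length `≡ 1 [MOD ℓ]`, among them one of length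
`((n - 1) ^ 2) ^ t` since `(n - 1) ^ 2 ≡ 1 [MOD ℓ]`; descending `t` times gives an edge `x → y`. -/

namespace Quiv

inductive WalkOfLen (J : Quiv) : ℕ → J.V → J.V → Prop
  | nil (a : J.V) : WalkOfLen J 0 a a
  | cons {k : ℕ} {a b c : J.V} : J.Edge a b → WalkOfLen J k b c → WalkOfLen J (k + 1) a c

namespace WalkOfLen

variable {J : Quiv} {k m : ℕ} {a b c : J.V}

theorem cast (h : J.WalkOfLen k a b) (hk : k = m) : J.WalkOfLen m a b := hk ▸ h

theorem single (h : J.Edge a b) : J.WalkOfLen 1 a b := cons h (nil b)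

theorem edge (h : J.WalkOfLen 1 a b) : J.Edge a b := by
  cases h with
  | cons hab hb => cases hb; exact hab

theorem append (h₁ : J.WalkOfLen k a b) (h₂ : J.WalkOfLen m b c) : J.WalkOfLen (k + m) a c := by
  induction h₁ with
  | nil => rwa [Nat.zero_add]
  | cons hab _ ih => rw [Nat.add_right_comm]; exact cons hab (ih h₂)

theorem split (h : J.WalkOfLen (k + m) a c) : ∃ b, J.WalkOfLen k a b ∧ J.WalkOfLen m b c := by
  induction k generalizing a with
  | zero => exact ⟨a, nil a, by rwa [Nat.zero_add] at h⟩
  | succ k ih =>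
    rw [Nat.add_right_comm] at h
    cases h with
    | cons hab hbc =>
      obtain ⟨d, hbd, hdc⟩ := ih hbc
      exact ⟨d, cons hab hbd, hdc⟩

theorem nsmul (h : J.WalkOfLen m a a) (j : ℕ) : J.WalkOfLen (j * m) a a := by
  induction j with
  | zero => rw [Nat.zero_mul]; exact nil a
  | succ j ih => rw [Nat.succ_mul]; exact ih.append h

theorem exists_of_loop (hm : 0 < m) (h : J.WalkOfLen m a a) (k : ℕ) :
    ∃ b, J.WalkOfLen k a b := by
  have hk : k ≤ (k + 1) * m := by nlinarith
  obtain ⟨b, hab, -⟩ := split ((h.nsmul (k + 1)).cast (Nat.add_sub_cancel' hk).symm)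
  exact ⟨b, hab⟩

theorem exists_vertices (h : J.WalkOfLen k a b) :
    ∃ v : ℕ → J.V, v 0 = a ∧ v k = b ∧ ∀ i < k, J.Edge (v i) (v (i + 1)) := by
  induction h with
  | nil a => exact ⟨fun _ => a, rfl, rfl, fun _ h => absurd h (Nat.not_lt_zero _)⟩
  | @cons k a b c hab _ ih =>
    obtain ⟨v, hv0, hvk, hv⟩ := ih
    refine ⟨fun | 0 => a | i + 1 => v i, rfl, hvk, fun i hi => ?_⟩
    cases i with
    | zero => show J.Edge a (v 0); rwa [hv0]
    | succ i => exact hv i (by omega)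

theorem of_hasWalk {v : ℕ → J.V} {e : ℕ → J.E} (h : HasWalk J k v e) :
    J.WalkOfLen k (v 0) (v k) := by
  induction k with
  | zero => exact nil _
  | succ k ih =>
    obtain ⟨hs, ht⟩ := h k k.lt_succ_self
    exact (ih fun i hi => h i (by omega)).append (single ⟨e k, hs, ht⟩)

end WalkOfLen

def StronglyConnected (J : Quiv) : Prop :=
  ∀ x y : J.V, ∃ m, J.WalkOfLen m x y

variable {J : Quiv} {a x : J.V} {m m' : ℕ}

def loopLengths (J : Quiv) (a : J.V) : AddSubmonoid ℕ where
  carrier := {m | J.WalkOfLen m a a}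
  add_mem' := WalkOfLen.append
  zero_mem' := .nil a

noncomputable def period (J : Quiv) (a : J.V) : ℕ := Nat.setGcd (J.loopLengths a)

theorem period_dvd (h : J.WalkOfLen m a a) : J.period a ∣ m := Nat.setGcd_dvd_of_mem h

theorem exists_loop_of_period_dvd (J : Quiv) (a : J.V) :
    ∃ N, ∀ m ≥ N, J.period a ∣ m → J.WalkOfLen m a a := by
  obtain ⟨N, hN⟩ := Nat.exists_mem_closure_of_ge (J.loopLengths a : Set ℕ)
  refine ⟨N, fun m hm hdvd => ?_⟩
  have h := hN m hm hdvd
  rwa [AddSubmonoid.closure_eq] at h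

theorem modEq_of_walkOfLen (hconn : J.StronglyConnected) (h : J.WalkOfLen m a x)
    (h' : J.WalkOfLen m' a x) : m ≡ m' [MOD J.period a] := by
  obtain ⟨r, hr⟩ := hconn x a
  have hm := Nat.modEq_zero_iff_dvd.2 (period_dvd (h.append hr))
  have hm' := Nat.modEq_zero_iff_dvd.2 (period_dvd (h'.append hr))
  exact Nat.ModEq.add_right_cancel' r (hm.trans hm'.symm)

def periodClass (J : Quiv) (a : J.V) (i : Fin (J.period a)) : Set J.V :=
  {x | ∃ m, J.WalkOfLen m a x ∧ m % J.period a = i}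

theorem existsUnique_mem_periodClass (hpos : 0 < J.period a)
    (hconn : J.StronglyConnected) (x : J.V) : ∃! i, x ∈ J.periodClass a i := by
  obtain ⟨m, hm⟩ := hconn a x
  refine ⟨⟨m % J.period a, Nat.mod_lt m hpos⟩, ⟨m, hm, rfl⟩, ?_⟩
  rintro i ⟨m', hm', hi⟩
  exact Fin.ext (hi.symm.trans (modEq_of_walkOfLen hconn hm' hm))

theorem periodClass_nonempty (hm : 0 < m) (ha : J.WalkOfLen m a a) (i : Fin (J.period a)) :
    (J.periodClass a i).Nonempty := by
  obtain ⟨x, hx⟩ := ha.exists_of_loop hm i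
  exact ⟨x, i, hx, Nat.mod_eq_of_lt i.isLt⟩

theorem exists_periodClass_source_target (hpos : 0 < J.period a)
    (hconn : J.StronglyConnected) (f : J.E) :
    ∃ i, J.s f ∈ J.periodClass a i ∧ J.t f ∈ J.periodClass a (finNext i) := by
  obtain ⟨m, hm⟩ := hconn a (J.s f)
  exact ⟨⟨m % J.period a, Nat.mod_lt m hpos⟩, ⟨m, hm, rfl⟩,
    m + 1, hm.append (.single ⟨f, rfl, rfl⟩), (Nat.mod_add_mod m _ 1).symm⟩

end Quiv

theorem Nat.sub_one_sq_modEq_one {ℓ n : ℕ} (hn : 0 < n) (h : ℓ ∣ n) :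
    (n - 1) ^ 2 ≡ 1 [MOD ℓ] := by
  rw [← ZMod.natCast_eq_natCast_iff, Nat.cast_pow, Nat.cast_sub hn,
    (ZMod.natCast_eq_zero_iff n ℓ).2 h]
  norm_num

open Quiv

namespace PhiInj

variable {n : ℕ} {J : Quiv} {a b c : J.V}

theorem edge_of_walkOfLen (hJ : PhiInj n J) (hn : 0 < n) (h : J.WalkOfLen (n - 1) a b) :
    J.Edge b a := by
  obtain ⟨v, rfl, rfl, hv⟩ := h.exists_vertices
  choose f hfs hft using hv
  obtain ⟨ψ, hψ⟩ := hJ ⟨fun i : Fin n => v i, fun j : Fin (n - 1) => f j j.isLt,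
    fun j : Fin (n - 1) => hfs j j.isLt, fun j : Fin (n - 1) => hft j j.isLt⟩
  have hψV (i : Fin n) : ψ.onV i = v i := congrFun (congrArg QuivHom.onV hψ) i
  let last : (Quiv.cyc n).E := ⟨n - 1, by omega⟩
  have hlast : (Quiv.cyc n).t last = (⟨0, hn⟩ : Fin n) := by
    apply Fin.ext
    simp [Quiv.cyc, last, Nat.sub_add_cancel hn]
  exact ⟨ψ.onE last, (ψ.comm_s last).trans (hψV _),
    (ψ.comm_t last).trans (hlast ▸ hψV _)⟩

theorem walkOfLen_rev (hJ : PhiInj n J) (hn : 0 < n) {k : ℕ} :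
    ∀ {a b : J.V}, J.WalkOfLen (k * (n - 1)) a b → J.WalkOfLen k b a := by
  induction k with
  | zero =>
    intro a b h
    rw [Nat.zero_mul] at h
    cases h
    exact .nil a
  | succ k ih =>
    intro a b h
    obtain ⟨c, hac, hcb⟩ := (h.cast (Nat.succ_mul k (n - 1))).split
    exact ((WalkOfLen.single (hJ.edge_of_walkOfLen hn hcb)).append (ih hac)).cast (Nat.add_comm 1 k)

theorem walkOfLen_of_mul_sq (hJ : PhiInj n J) (hn : 0 < n) {k : ℕ}
    (h : J.WalkOfLen (k * (n - 1) ^ 2) a b) : J.WalkOfLen k a b :=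
  hJ.walkOfLen_rev hn (hJ.walkOfLen_rev hn (h.cast (by rw [sq, Nat.mul_assoc])))

theorem edge_of_walkOfLen_pow (hJ : PhiInj n J) (hn : 0 < n) (t : ℕ)
    (h : J.WalkOfLen (((n - 1) ^ 2) ^ t) a b) : J.Edge a b := by
  induction t with
  | zero => exact (h.cast (pow_zero _)).edge
  | succ t ih => exact ih (hJ.walkOfLen_of_mul_sq hn (h.cast (pow_succ _ t)))

theorem loop_of_walkOfLen (hJ : PhiInj n J) (hn : 0 < n) (h : J.WalkOfLen (n - 1) a b) :
    J.WalkOfLen n a a :=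
  (h.append (.single (hJ.edge_of_walkOfLen hn h))).cast (Nat.sub_add_cancel hn)

theorem walkOfLen_of_edge_of_loop (hJ : PhiInj n J) (hn : 2 ≤ n) (hcb : J.Edge c b)
    (hb : J.WalkOfLen n b b) : J.WalkOfLen (n - 1) b c := by
  obtain ⟨d, hbd⟩ := hb.exists_of_loop (by omega) (n - 2)
  have hcd : J.WalkOfLen (n - 1) c d := ((WalkOfLen.single hcb).append hbd).cast (by omega)
  exact (hbd.append (.single (hJ.edge_of_walkOfLen (by omega) hcd))).cast (by omega)

theorem loop_of_adj_s18 (hJ : PhiInj n J) (hn : 2 ≤ n) (hbc : J.Adj b c) (hb : J.WalkOfLen n b b) :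
    J.WalkOfLen n c c := by
  suffices ∃ d, J.WalkOfLen (n - 1) c d from
    this.elim fun _ hcd => hJ.loop_of_walkOfLen (by omega) hcd
  rcases hbc with hbc | hcb
  · obtain ⟨w, -, hwb⟩ := (hb.cast (show n = 2 + (n - 2) by omega)).split
    have hcw := hJ.edge_of_walkOfLen (by omega) ((hwb.append (.single hbc)).cast (by omega))
    exact ⟨b, ((WalkOfLen.single hcw).append hwb).cast (by omega)⟩
  · obtain ⟨d, hbd⟩ := hb.exists_of_loop (by omega) (n - 2)
    exact ⟨d, ((WalkOfLen.single hcb).append hbd).cast (by omega)⟩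

theorem loop_of_weaklyConnected (hJ : PhiInj n J) (hn : 2 ≤ n) (hc : J.WeaklyConnected)
    (ha : J.WalkOfLen n a a) (x : J.V) : J.WalkOfLen n x x := by
  induction hc a x with
  | refl => exact ha
  | tail _ hyz ih => exact hJ.loop_of_adj_s18 hn hyz ih

theorem stronglyConnected (hJ : PhiInj n J) (hn : 2 ≤ n) (hc : J.WeaklyConnected)
    (hloop : ∀ x, J.WalkOfLen n x x) : J.StronglyConnected := by
  intro x y
  induction hc x y with
  | refl => exact ⟨0, .nil x⟩
  | tail _ hyz ih =>
    obtain ⟨m, hm⟩ := ih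
    rcases hyz with h | h
    · exact ⟨m + 1, hm.append (.single h)⟩
    · exact ⟨m + (n - 1), hm.append (hJ.walkOfLen_of_edge_of_loop hn h (hloop _))⟩

theorem edge_of_mem_periodClass {x y : J.V} (hJ : PhiInj n J) (hn : 3 ≤ n)
    (hconn : J.StronglyConnected) (ha : J.WalkOfLen n a a)
    {i : Fin (J.period a)} (hx : x ∈ J.periodClass a i) (hy : y ∈ J.periodClass a (finNext i)) :
    J.Edge x y := by
  obtain ⟨p, hp, hpi⟩ := hx
  obtain ⟨q, hq, hqi⟩ := hy
  obtain ⟨r, hr⟩ := hconn x a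
  obtain ⟨N, hN⟩ := J.exists_loop_of_period_dvd a
  -- pad the walk `x → a → y` by a loop at `a` to the length `K`, large and `≡ 1` mod the period
  set K := ((n - 1) ^ 2) ^ (r + q + N)
  have hK : r + q + N < K := Nat.lt_pow_self (Nat.one_lt_pow two_ne_zero (by omega))
  have hq' : q ≡ p + 1 [MOD J.period a] := by
    rw [Nat.ModEq, hqi]
    show (i.val + 1) % _ = _
    rw [← hpi, Nat.mod_add_mod]
  have hpr : p + r ≡ 0 [MOD J.period a] := Nat.modEq_zero_iff_dvd.2 (period_dvd (hp.append hr))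
  have hrq : r + q ≡ K [MOD J.period a] :=
    calc r + q ≡ r + (p + 1) [MOD J.period a] := hq'.add_left r
      _ = p + r + 1 := by ring
      _ ≡ 0 + 1 [MOD J.period a] := hpr.add_right 1
      _ = 1 ^ (r + q + N) := (one_pow _).symm
      _ ≡ K [MOD J.period a] :=
        ((Nat.sub_one_sq_modEq_one (by omega) (period_dvd ha)).pow _).symm
  have hloop := hN (K - (r + q)) (by omega) ((Nat.modEq_iff_dvd' (by omega)).1 hrq)
  exact hJ.edge_of_walkOfLen_pow (by omega) (r + q + N)
    ((hr.append (hloop.append hq)).cast (by omega))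

end PhiInj

/-- structural characterization: a `φ_n`-injective weakly
connected quiver with a walk of length `n-1` is a blow-up of `C_ℓ` for some
`ℓ ∣ n`. -/
theorem structure_blowup_of_cycle (n : ℕ) (hn : 3 ≤ n) (J : Quiv)
    (hJ : PhiInj n J) (hc : J.WeaklyConnected)
    (hw : ∃ (v : ℕ → J.V) (e : ℕ → J.E), HasWalk J (n - 1) v e) :
    ∃ ℓ, ℓ ∣ n ∧ 0 < ℓ ∧ ∃ B : Fin ℓ → Set J.V,
      (∀ x, ∃! i, x ∈ B i) ∧
      (∀ i, (B i).Nonempty) ∧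
      (∀ f, ∃ i, J.s f ∈ B i ∧ J.t f ∈ B (finNext i)) ∧
      (∀ i x y, x ∈ B i → y ∈ B (finNext i) → J.Edge x y) := by
  obtain ⟨v, e, hwalk⟩ := hw
  have hloop : ∀ x, J.WalkOfLen n x x := hJ.loop_of_weaklyConnected (by omega) hc
    (hJ.loop_of_walkOfLen (by omega) (.of_hasWalk hwalk))
  have hconn := hJ.stronglyConnected (by omega) hc hloop
  have hdvd : J.period (v 0) ∣ n := Quiv.period_dvd (hloop (v 0))
  have hpos : 0 < J.period (v 0) := Nat.pos_of_dvd_of_pos hdvd (by omega)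
  exact ⟨J.period (v 0), hdvd, hpos, J.periodClass (v 0),
    Quiv.existsUnique_mem_periodClass hpos hconn,
    Quiv.periodClass_nonempty (by omega) (hloop (v 0)),
    Quiv.exists_periodClass_source_target hpos hconn,
    fun _ _ _ hx hy => hJ.edge_of_mem_periodClass hn hconn (hloop (v 0)) hx hy⟩
end

section
/- If a quiver J is φ_n-injective (n ≥ 3) and contains a closed walk of minimal length ℓ ≥ 2 with distinct vertices v_0, …, v_{ℓ−1}, then for any indices j, k with j − k not congruent to 1 mod ℓ, there is no edge of J from the out-neighborhood class B_k = τ(σ^{−1}(v_{k−1})) to B_j = τ(σ^{−1}(v_{j−1})); i.e., edges from B_k terminate in B_j only when j − k ≡ 1 (mod ℓ). -/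
/-
Put `a = k - 1`, `b = j - 1`, so that `v_a → x`, `x → y` and `v_b → y` are edges. Closing the
walk `v_p ⇝ v_a → x → y` of length `n - 1`, whose first `n - 3` steps run along the cycle, gives
an edge `y → v_p`; closing `v_b → y → v_p ⇝ v_a` then gives an edge `v_a → v_b`. Running along
the cycle from `v_b` to `v_a` and back along this edge is a closed walk of length at most `ℓ`,
so by minimality of `ℓ` it has length exactly `ℓ`: `v_b` follows `v_a` on the cycle, which is
`j ≡ k + 1 (mod ℓ)`.
-/

def Quiv.ReachIn (J : Quiv) (m : ℕ) (a b : J.V) : Prop :=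
  ∃ v e, HasWalk J m v e ∧ v 0 = a ∧ v m = b

namespace Quiv

variable {J : Quiv} {a b c : J.V} {m m' : ℕ}

theorem Edge.reachIn_one (h : J.Edge a b) : J.ReachIn 1 a b := by
  obtain ⟨f, hs, ht⟩ := h
  refine ⟨fun i => if i = 0 then a else b, fun _ => f, fun i hi => ?_, rfl, rfl⟩
  obtain rfl : i = 0 := by omega
  exact ⟨hs, ht⟩

theorem ReachIn.append (h : J.ReachIn m a b) (h' : J.ReachIn m' b c) :
    J.ReachIn (m + m') a c := by
  obtain ⟨v, e, hw, rfl, rfl⟩ := h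
  obtain ⟨v', e', hw', hv'0, rfl⟩ := h'
  refine ⟨fun i => if i ≤ m then v i else v' (i - m),
    fun i => if i < m then e i else e' (i - m), fun i hi => ?_, by simp, ?_⟩
  · rcases Nat.lt_or_ge i m with hlt | hge
    · simpa [hlt, hlt.le, Nat.succ_le_of_lt hlt] using hw i hlt
    · obtain ⟨hs, ht⟩ := hw' (i - m) (by omega)
      have hsucc : i + 1 - m = i - m + 1 := by omega
      refine ⟨?_, ?_⟩
      · rcases hge.eq_or_lt with rfl | hgt
        · simpa [hv'0] using hs
        · simpa [hgt.not_ge, Nat.not_lt.2 hge] using hs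
      · simpa [Nat.not_lt.2 hge, show ¬ i + 1 ≤ m by omega, hsucc] using ht
  · rcases Nat.eq_zero_or_pos m' with rfl | hm'
    · simp [hv'0]
    · simp [show ¬ m + m' ≤ m by omega]

theorem closedWalk_of_reachIn (h : J.ReachIn m a a) : ClosedWalk J m := by
  obtain ⟨v, e, hw, h0, hm⟩ := h
  exact ⟨v, e, hw, hm.trans h0.symm⟩

end Quiv

theorem PhiInj.edge_of_reachIn {n : ℕ} {J : Quiv} {a b : J.V} (hJ : PhiInj n J) (hn : 0 < n)
    (h : J.ReachIn (n - 1) a b) : J.Edge b a := by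
  obtain ⟨w, f, hw, rfl, rfl⟩ := h
  obtain ⟨ψ', hψ'⟩ := hJ ⟨fun i : Fin n => w i, fun i : Fin (n - 1) => f i,
    fun i : Fin (n - 1) => (hw i i.isLt).1, fun i : Fin (n - 1) => (hw i i.isLt).2⟩
  have hV (i : Fin n) : ψ'.onV i = w i := congrFun (congrArg QuivHom.onV hψ') i
  have hlast : (Quiv.cyc n).t ⟨n - 1, by omega⟩ = (⟨0, hn⟩ : Fin n) :=
    Fin.ext (by simp [Quiv.cyc, Nat.sub_add_cancel hn])
  refine ⟨ψ'.onE ⟨n - 1, by omega⟩, ?_, ?_⟩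
  · exact (ψ'.comm_s _).trans (hV ⟨n - 1, by omega⟩)
  · exact (ψ'.comm_t _).trans (hlast ▸ hV ⟨0, hn⟩)

section Cycle

variable {J : Quiv} {ℓ : ℕ} {v : ℕ → J.V} {e : ℕ → J.E}

theorem HasWalk.periodic (hℓ : 0 < ℓ) (hwalk : HasWalk J ℓ v e) (hclosed : v ℓ = v 0)
    (i : ℕ) : J.s (e (i % ℓ)) = v (i % ℓ) ∧ J.t (e (i % ℓ)) = v ((i + 1) % ℓ) := by
  obtain ⟨hs, ht⟩ := hwalk (i % ℓ) (Nat.mod_lt _ hℓ)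
  refine ⟨hs, ht.trans ?_⟩
  have hmod : (i % ℓ + 1) % ℓ = (i + 1) % ℓ := Nat.mod_add_mod i ℓ 1
  rcases (show i % ℓ + 1 ≤ ℓ from Nat.mod_lt i hℓ).lt_or_eq with hlt | heq
  · rw [← hmod, Nat.mod_eq_of_lt hlt]
  · rw [← hmod, heq, Nat.mod_self, hclosed]

theorem HasWalk.reachIn_of_add_modEq (hℓ : 0 < ℓ) (hwalk : HasWalk J ℓ v e)
    (hclosed : v ℓ = v 0) {p q m : ℕ} (h : p + m ≡ q [MOD ℓ]) :
    J.ReachIn m (v (p % ℓ)) (v (q % ℓ)) :=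
  ⟨fun i => v ((p + i) % ℓ), fun i => e ((p + i) % ℓ),
    fun i _ => hwalk.periodic hℓ hclosed (p + i), rfl, congrArg v h⟩

end Cycle

theorem exists_lt_add_modEq {ℓ : ℕ} (hℓ : 0 < ℓ) (b a : ℕ) : ∃ d < ℓ, b + d ≡ a [MOD ℓ] := by
  refine ⟨(a + (ℓ - 1) * b) % ℓ, Nat.mod_lt _ hℓ, ?_⟩
  have hsum : b + (a + (ℓ - 1) * b) = a + ℓ * b := by
    rw [Nat.sub_one_mul]
    have := Nat.le_mul_of_pos_left b hℓ
    omega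
  calc b + (a + (ℓ - 1) * b) % ℓ ≡ b + (a + (ℓ - 1) * b) [MOD ℓ] := (Nat.mod_modEq _ _).add_left b
    _ = a + ℓ * b := hsum
    _ ≡ a [MOD ℓ] := by simp [Nat.ModEq]

theorem edges_between_classes_general (n : ℕ) (hn : 3 ≤ n) (J : Quiv) (hJ : PhiInj n J)
    (ℓ : ℕ) (v : ℕ → J.V) (e : ℕ → J.E)
    (hwalk : HasWalk J ℓ v e) (hclosed : v ℓ = v 0)
    (hmin : IsLeast {m | 1 ≤ m ∧ ClosedWalk J m} ℓ)
    (j k : ℕ) (hne : ¬ (j ≡ k + 1 [MOD ℓ]))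
    (x y : J.V)
    (hx : ∃ f, J.s f = v ((k + ℓ - 1) % ℓ) ∧ J.t f = x)
    (hy : ∃ f, J.s f = v ((j + ℓ - 1) % ℓ) ∧ J.t f = y) :
    ¬ J.Edge x y := by
  intro hxy
  have hℓ : 0 < ℓ := hmin.1.1
  have cycle {p q m : ℕ} (h : p + m ≡ q [MOD ℓ]) := hwalk.reachIn_of_add_modEq hℓ hclosed h
  obtain ⟨p, -, hp⟩ := exists_lt_add_modEq hℓ (n - 3) (k + ℓ - 1)
  rw [add_comm] at hp
  have hyp : J.Edge y (v (p % ℓ)) := hJ.edge_of_reachIn (by omega) <| by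
    simpa [show n - 3 + 1 + 1 = n - 1 by omega] using
      ((cycle hp).append (Quiv.Edge.reachIn_one hx)).append hxy.reachIn_one
  have hab : J.Edge (v ((k + ℓ - 1) % ℓ)) (v ((j + ℓ - 1) % ℓ)) :=
    hJ.edge_of_reachIn (by omega) <| by
      simpa [show 1 + 1 + (n - 3) = n - 1 by omega] using
        ((Quiv.Edge.reachIn_one hy).append hyp.reachIn_one).append (cycle hp)
  obtain ⟨d, hdℓ, hd⟩ := exists_lt_add_modEq hℓ (j + ℓ - 1) (k + ℓ - 1)
  have hℓd : ℓ ≤ d + 1 :=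
    hmin.2 ⟨by omega, Quiv.closedWalk_of_reachIn ((cycle hd).append hab.reachIn_one)⟩
  obtain rfl : d = ℓ - 1 := by omega
  apply hne
  rw [← ZMod.natCast_eq_natCast_iff] at hd ⊢
  push_cast [Nat.cast_sub (show 1 ≤ j + ℓ by omega), Nat.cast_sub (show 1 ≤ k + ℓ by omega),
    Nat.cast_sub hℓ, ZMod.natCast_self] at hd ⊢
  linear_combination hd

/-- for a minimal closed walk `v_0 → ⋯ → v_{ℓ-1} → v_0` in a
`φ_n`-injective quiver, with `B_j = τ(σ⁻¹(v_{j-1}))`, edges from `B_k` can only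
terminate in `B_j` when `j ≡ k + 1 (mod ℓ)`. -/
theorem edges_between_classes (n : ℕ) (hn : 3 ≤ n) (J : Quiv) (hJ : PhiInj n J)
    (ℓ : ℕ) (hℓ : 2 ≤ ℓ) (v : ℕ → J.V) (e : ℕ → J.E)
    (hwalk : HasWalk J ℓ v e) (hclosed : v ℓ = v 0)
    (hdist : ∀ i < ℓ, ∀ j < ℓ, v i = v j → i = j)
    (hmin : IsLeast {m | 1 ≤ m ∧ ClosedWalk J m} ℓ)
    (j k : ℕ) (hj : j < ℓ) (hk : k < ℓ) (hne : ¬ (j ≡ k + 1 [MOD ℓ]))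
    (x y : J.V)
    (hx : ∃ f, J.s f = v ((k + ℓ - 1) % ℓ) ∧ J.t f = x)
    (hy : ∃ f, J.s f = v ((j + ℓ - 1) % ℓ) ∧ J.t f = y) :
    ¬ J.Edge x y :=
  edges_between_classes_general n hn J hJ ℓ v e hwalk hclosed hmin j k hne x y hx hy
end
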